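/- (Negative probabilities.) Let G be the complete graph K₄ with one edge removed (vertices {1,2,3,4}, edges (1,2),(2,3),(3,4),(4,1),(4,2)) with unit weights q_e = 1 for all e. Let e=(1,2) and e'=(2,3) be the two edges sharing vertex 2, and suppose ρ ∈ ℝ^{Ê} has positive entries with ρ_{(e,2)} ≠ ρ_{(e',2)}. Then for every γ ∈ (0,2) and every diagonal matrix D_A with all diagonal entries different from 1, the matrix M_A = (I−D_A)⁻¹(T_A−D_A) has at least one strictly negative entry; in particular M_A is not a probability transition matrix. -/

import Mathlib

open Matrix BigOperators

noncomputable section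

variable {V : Type*} [Fintype V] [DecidableEq V]

/-- The extended index set `Ê = {(e,i) : e ∈ E, i an endpoint of e}`. -/
abbrev Ehat (G : SimpleGraph V) [DecidableRel G.Adj] : Type _ :=
  {p : Sym2 V × V // p.1 ∈ G.edgeSet ∧ p.2 ∈ p.1}

/-- The `|Ê| × |V|` matrix `S`, with `S_{(e,i),j} = 1` iff `j = i`. -/
def Smat (G : SimpleGraph V) [DecidableRel G.Adj] : Matrix (Ehat G) V ℝ :=
  fun p j => if p.val.2 = j then 1 else 0

/-- The `|Ê| × |Ê|` block-diagonal matrix `Q`, whose block for edge `e = (i,j)` acts on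
coordinates `(e,i), (e,j)` as `q_e · [[1,-1],[-1,1]]`. -/
def Qmat (G : SimpleGraph V) [DecidableRel G.Adj] (q : Sym2 V → ℝ) :
    Matrix (Ehat G) (Ehat G) ℝ :=
  fun p p' =>
    if p.val.1 = p'.val.1 then (if p.val.2 = p'.val.2 then q p.val.1 else - q p.val.1) else 0

/-- The element `(e, i)` of `Ê` associated with an edge `e = (i,j)`. -/
def eFst {G : SimpleGraph V} [DecidableRel G.Adj] {i j : V} (h : G.Adj i j) : Ehat G :=
  ⟨(s(i,j), i), ⟨G.mem_edgeSet.mpr h, Sym2.mem_mk_left i j⟩⟩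

/-- The element `(e, j)` of `Ê` associated with an edge `e = (i,j)`. -/
def eSnd {G : SimpleGraph V} [DecidableRel G.Adj] {i j : V} (h : G.Adj i j) : Ehat G :=
  ⟨(s(i,j), j), ⟨G.mem_edgeSet.mpr h, Sym2.mem_mk_right i j⟩⟩

/-- For `(e,i) ∈ Ê` with `e = (i,j)`, the element `(e,j)` given by the other endpoint. -/
def otherE {G : SimpleGraph V} [DecidableRel G.Adj] (p : Ehat G) : Ehat G :=
  ⟨(p.val.1, Sym2.Mem.other' p.prop.2), ⟨p.prop.1, Sym2.other_mem' p.prop.2⟩⟩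

/-- The complete graph `K₄` on vertices `{0,1,2,3}` with the edge `{0,2}` removed
(in the paper's labelling `{1,2,3,4}`, the edge `{1,3}` is removed, leaving the edges
`(1,2), (2,3), (3,4), (4,1), (4,2)`). -/
def K4minus : SimpleGraph (Fin 4) where
  Adj v w := v ≠ w ∧ s(v, w) ≠ s((0 : Fin 4), (2 : Fin 4))
  symm := by
    constructor
    intro v w h
    exact ⟨h.1.symm, by rw [Sym2.eq_swap]; exact h.2⟩
  loopless := ⟨fun v h => h.1 rfl⟩

instance : DecidableRel K4minus.Adj := fun v w =>
  inferInstanceAs (Decidable (v ≠ w ∧ s(v, w) ≠ s((0 : Fin 4), (2 : Fin 4))))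

end

/-!
`A = (I + D_ρ⁻¹Q)⁻¹` is block diagonal with one positive `2 × 2` block per edge, and `B` replaces
a vector on `Ê` by its `ρ`-weighted average over the darts at each vertex. Off the diagonal,
`M_A = (I - D_A)⁻¹(T_A - D_A)` has entries `-γ (A + B - 2BA)_{pp'} / (1 - D_A(p))`.
If some `D_A(p) > 1`, let `p'` be the far end of a second edge at the vertex of `p`: there `A`
and `B` vanish while `BA > 0`. If all `D_A(p) < 1`, let `p` be the lightest dart at a vertex `v`
of degree three, so that `2ρ_p < σ_v`, the total weight at `v`; at `(p, p̄)` the bracket is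
`A_{pp̄} (1 - 2ρ_p / σ_v) > 0`.
-/

open Matrix

section Darts

variable {V : Type*} [DecidableEq V] {G : SimpleGraph V} [DecidableRel G.Adj]

@[simp]
lemma otherE_fst (p : Ehat G) : (otherE p).val.1 = p.val.1 := rfl

lemma otherE_snd_ne (p : Ehat G) : (otherE p).val.2 ≠ p.val.2 := by
  have h := Sym2.other_ne (G.not_isDiag_of_mem_edgeSet p.prop.1) p.prop.2
  rwa [Sym2.other_eq_other'] at h

lemma otherE_ne (p : Ehat G) : otherE p ≠ p :=
  fun h => otherE_snd_ne p (congrArg (·.val.2) h)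

@[simp]
lemma otherE_otherE (p : Ehat G) : otherE (otherE p) = p :=
  Subtype.ext (Prod.ext rfl (Sym2.other_invol' p.prop.2 _))

lemma eq_or_eq_otherE_of_fst_eq {p p' : Ehat G} (h : p'.val.1 = p.val.1) :
    p' = p ∨ p' = otherE p := by
  have hm : p'.val.2 ∈ p.val.1 := h ▸ p'.prop.2
  rw [← Sym2.other_spec' p.prop.2, Sym2.mem_iff] at hm
  exact hm.imp (fun h2 => Subtype.ext (Prod.ext h h2)) fun h2 => Subtype.ext (Prod.ext h h2)

lemma fst_ne_of_ne_of_snd_eq {p r : Ehat G} (hrp : r ≠ p) (h : r.val.2 = p.val.2) :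
    r.val.1 ≠ p.val.1 := by
  intro he
  rcases eq_or_eq_otherE_of_fst_eq he with rfl | rfl
  · exact hrp rfl
  · exact otherE_snd_ne p h

lemma sum_eq_add_otherE [Fintype V] {M : Type*} [AddCommMonoid M] (p : Ehat G) {f : Ehat G → M}
    (hf : ∀ r : Ehat G, r.val.1 ≠ p.val.1 → f r = 0) : ∑ r, f r = f p + f (otherE p) :=
  Fintype.sum_eq_add _ _ (otherE_ne p).symm fun r hr =>
    hf r fun he => (eq_or_eq_otherE_of_fst_eq he).elim hr.1 hr.2

end Darts

lemma inv_diagonal_of_ne_zero {n K : Type*} [Fintype n] [DecidableEq n] [Field K] {d : n → K}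
    (hd : ∀ i, d i ≠ 0) : (diagonal d)⁻¹ = diagonal d⁻¹ :=
  inv_eq_right_inv <| by
    rw [diagonal_mul_diagonal, ← diagonal_one]
    exact congrArg diagonal (funext fun i => mul_inv_cancel₀ (hd i))

lemma inv_one_sub_diagonal_mul_apply_of_ne {n K : Type*} [Fintype n] [DecidableEq n] [Field K]
    {d : n → K} (hd : ∀ i, d i ≠ 1) (c : K) (X : Matrix n n K) {i j : n} (hij : i ≠ j) :
    ((1 - diagonal d)⁻¹ * (1 - c • X - diagonal d)) i j = -(c * X i j) / (1 - d i) := by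
  rw [← diagonal_one, diagonal_sub, inv_diagonal_of_ne_zero fun i => sub_ne_zero.2 (hd i).symm,
    diagonal_mul]
  simp [hij, div_eq_inv_mul]

noncomputable section Blocks

variable {V : Type*} [DecidableEq V] {G : SimpleGraph V} [DecidableRel G.Adj]
  (q : Sym2 V → ℝ) (ρ : Ehat G → ℝ)

lemma Qmat_apply_self (p : Ehat G) : Qmat G q p p = q p.val.1 := by
  simp [Qmat]

lemma Qmat_apply_otherE (p : Ehat G) : Qmat G q p (otherE p) = -q p.val.1 := by
  simp only [Qmat, otherE_fst, if_true]
  rw [if_neg (otherE_snd_ne p).symm]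

lemma Qmat_apply_of_fst_ne {p r : Ehat G} (h : p.val.1 ≠ r.val.1) : Qmat G q p r = 0 := by
  simp [Qmat, h]

/-- The determinant of the block of `D_ρ + Q` on the edge of `p`. -/
def edgeBlockDet (p : Ehat G) : ℝ :=
  ρ p * ρ (otherE p) + q p.val.1 * (ρ p + ρ (otherE p))

/-- `(D_ρ + Q)⁻¹ D_ρ`, inverted edge by edge. -/
def edgeBlockInv : Matrix (Ehat G) (Ehat G) ℝ := fun p p' =>
  if p' = p then ρ p * (ρ (otherE p) + q p.val.1) / edgeBlockDet q ρ p
  else if p' = otherE p then q p.val.1 * ρ (otherE p) / edgeBlockDet q ρ p else 0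

variable {q ρ}

lemma edgeBlockDet_otherE (p : Ehat G) : edgeBlockDet q ρ (otherE p) = edgeBlockDet q ρ p := by
  simp only [edgeBlockDet, otherE_otherE, otherE_fst]
  ring

lemma edgeBlockDet_pos (hq : ∀ e, 0 ≤ q e) (hρ : ∀ p, 0 < ρ p) (p : Ehat G) :
    0 < edgeBlockDet q ρ p := by
  have := hρ p; have := hρ (otherE p); have := hq p.val.1
  unfold edgeBlockDet; positivity

lemma edgeBlockInv_apply_self (p : Ehat G) :
    edgeBlockInv q ρ p p = ρ p * (ρ (otherE p) + q p.val.1) / edgeBlockDet q ρ p := by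
  simp [edgeBlockInv]

lemma edgeBlockInv_apply_otherE (p : Ehat G) :
    edgeBlockInv q ρ p (otherE p) = q p.val.1 * ρ (otherE p) / edgeBlockDet q ρ p := by
  simp [edgeBlockInv, otherE_ne p]

lemma edgeBlockInv_otherE_apply (p : Ehat G) :
    edgeBlockInv q ρ (otherE p) p = q p.val.1 * ρ p / edgeBlockDet q ρ p := by
  simpa [edgeBlockDet_otherE] using edgeBlockInv_apply_otherE (q := q) (ρ := ρ) (otherE p)

lemma edgeBlockInv_otherE_apply_otherE (p : Ehat G) :
    edgeBlockInv q ρ (otherE p) (otherE p)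
      = ρ (otherE p) * (ρ p + q p.val.1) / edgeBlockDet q ρ p := by
  simpa [edgeBlockDet_otherE] using edgeBlockInv_apply_self (q := q) (ρ := ρ) (otherE p)

lemma edgeBlockInv_apply_of_ne {p r : Ehat G} (hrp : r ≠ p) (hro : r ≠ otherE p) :
    edgeBlockInv q ρ p r = 0 := by
  simp [edgeBlockInv, hrp, hro]

lemma edgeBlockInv_apply_of_fst_ne {p r : Ehat G} (h : p.val.1 ≠ r.val.1) :
    edgeBlockInv q ρ p r = 0 :=
  edgeBlockInv_apply_of_ne (fun h' => h (by rw [h'])) fun h' => h (by rw [h', otherE_fst])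

lemma edgeBlockInv_apply_otherE_pos (hq : ∀ e, 0 < q e) (hρ : ∀ p, 0 < ρ p) (p : Ehat G) :
    0 < edgeBlockInv q ρ p (otherE p) := by
  rw [edgeBlockInv_apply_otherE]
  have := hq p.val.1; have := hρ (otherE p)
  have := edgeBlockDet_pos (fun e => (hq e).le) hρ p
  positivity

lemma one_add_diagonal_inv_mul_Qmat_apply [Fintype V] (hρ : ∀ p, ρ p ≠ 0) (p r : Ehat G) :
    (1 + (diagonal ρ)⁻¹ * Qmat G q) p r
      = (1 : Matrix (Ehat G) (Ehat G) ℝ) p r + Qmat G q p r / ρ p := by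
  rw [inv_diagonal_of_ne_zero hρ, Matrix.add_apply, diagonal_mul, Pi.inv_apply, inv_mul_eq_div]

theorem inv_one_add_diagonal_inv_mul_Qmat [Fintype V] (hq : ∀ e, 0 ≤ q e)
    (hρ : ∀ p, 0 < ρ p) :
    (1 + (diagonal ρ)⁻¹ * Qmat G q)⁻¹ = edgeBlockInv q ρ := by
  have hC := one_add_diagonal_inv_mul_Qmat_apply (q := q) fun p => (hρ p).ne'
  refine inv_eq_right_inv (ext fun p r => ?_)
  rw [mul_apply, sum_eq_add_otherE p fun s hs => by
    rw [hC, one_apply_ne fun h => hs (by rw [h]), Qmat_apply_of_fst_ne q (Ne.symm hs)]; simp]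
  rw [hC, hC, one_apply_eq, one_apply_ne (otherE_ne p).symm, Qmat_apply_self, Qmat_apply_otherE]
  have hD := (edgeBlockDet_pos hq hρ p).ne'
  have hρp := (hρ p).ne'
  by_cases hrp : r = p
  · subst hrp
    rw [edgeBlockInv_apply_self, edgeBlockInv_otherE_apply, one_apply_eq]
    field_simp
    unfold edgeBlockDet
    ring
  by_cases hro : r = otherE p
  · subst hro
    rw [edgeBlockInv_apply_otherE, edgeBlockInv_otherE_apply_otherE,
      one_apply_ne (otherE_ne p).symm]
    field_simp
    ring
  rw [edgeBlockInv_apply_of_ne hrp hro,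
    edgeBlockInv_apply_of_ne hro (by rwa [otherE_otherE]), one_apply_ne (Ne.symm hrp)]
  ring

end Blocks

noncomputable section VertexAverage

variable {V : Type*} [Fintype V] [DecidableEq V] {G : SimpleGraph V} [DecidableRel G.Adj]
  (ρ : Ehat G → ℝ)

def vertexWeight (v : V) : ℝ :=
  ∑ p ∈ Finset.univ.filter (fun p : Ehat G => p.val.2 = v), ρ p

def vertexAverage : Matrix (Ehat G) (Ehat G) ℝ := fun p p' =>
  if p'.val.2 = p.val.2 then ρ p' / vertexWeight ρ p.val.2 else 0

variable {ρ}

lemma transpose_Smat_mul_diagonal_mul_Smat :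
    (Smat G)ᵀ * diagonal ρ * Smat G = diagonal (vertexWeight ρ) := by
  ext v w
  rw [mul_apply]
  simp only [mul_diagonal, transpose_apply, Smat, diagonal_apply, vertexWeight, Finset.sum_filter]
  split_ifs with h
  · subst h
    exact Finset.sum_congr rfl fun p _ => by split_ifs <;> simp
  · exact Finset.sum_eq_zero fun p _ => by split_ifs <;> simp_all

lemma Smat_mul_inv_mul_eq_vertexAverage (hσ : ∀ v, vertexWeight ρ v ≠ 0) :
    Smat G * ((Smat G)ᵀ * diagonal ρ * Smat G)⁻¹ * (Smat G)ᵀ * diagonal ρ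
      = vertexAverage ρ := by
  rw [transpose_Smat_mul_diagonal_mul_Smat, inv_diagonal_of_ne_zero hσ]
  ext p p'
  rw [mul_diagonal, mul_apply]
  simp only [mul_diagonal, transpose_apply, Smat, vertexAverage]
  by_cases h : p.val.2 = p'.val.2
  · simp [h, div_eq_inv_mul]
  · simp [h, Ne.symm h]

lemma le_vertexWeight (hρ : ∀ p, 0 < ρ p) (p : Ehat G) : ρ p ≤ vertexWeight ρ p.val.2 :=
  Finset.single_le_sum (fun r _ => (hρ r).le) (by simp)

lemma exists_two_mul_lt_vertexWeight (hρ : ∀ p, 0 < ρ p) {p₁ p₂ p₃ : Ehat G}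
    (h12 : p₁ ≠ p₂) (h13 : p₁ ≠ p₃) (h23 : p₂ ≠ p₃)
    (h2 : p₂.val.2 = p₁.val.2) (h3 : p₃.val.2 = p₁.val.2) :
    ∃ p : Ehat G, 2 * ρ p < vertexWeight ρ p.val.2 := by
  have hsum : ρ p₁ + ρ p₂ + ρ p₃ ≤ vertexWeight ρ p₁.val.2 := by
    have hsub :
        {p₁, p₂, p₃} ⊆ Finset.univ.filter (fun p : Ehat G => p.val.2 = p₁.val.2) := by
      simp [Finset.insert_subset_iff, h2, h3]
    calc ρ p₁ + ρ p₂ + ρ p₃ = ∑ p ∈ {p₁, p₂, p₃}, ρ p := by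
          rw [Finset.sum_insert (by simp [h12, h13]), Finset.sum_pair h23, add_assoc]
      _ ≤ vertexWeight ρ p₁.val.2 :=
          Finset.sum_le_sum_of_subset_of_nonneg hsub fun p _ _ => (hρ p).le
  by_contra! h
  have h₁ := h p₁
  have h₂ := h p₂
  have h₃ := h p₃
  rw [h2] at h₂
  rw [h3] at h₃
  linarith [hρ p₁, hρ p₂, hρ p₃]

end VertexAverage

section Entries

variable {V : Type*} [Fintype V] [DecidableEq V] {G : SimpleGraph V} [DecidableRel G.Adj]
  {q : Sym2 V → ℝ} {ρ : Ehat G → ℝ}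

lemma vertexAverage_apply_of_snd_eq {p p' : Ehat G} (h : p'.val.2 = p.val.2) :
    vertexAverage ρ p p' = ρ p' / vertexWeight ρ p.val.2 :=
  if_pos h

lemma vertexAverage_apply_of_snd_ne {p p' : Ehat G} (h : p'.val.2 ≠ p.val.2) :
    vertexAverage ρ p p' = 0 :=
  if_neg h

lemma vertexAverage_mul_edgeBlockInv_apply (p p' : Ehat G) :
    (vertexAverage ρ * edgeBlockInv q ρ) p p'
      = vertexAverage ρ p p' * edgeBlockInv q ρ p' p'
        + vertexAverage ρ p (otherE p') * edgeBlockInv q ρ (otherE p') p' :=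
  (mul_apply ..).trans <| sum_eq_add_otherE p' fun r hr => by
    rw [edgeBlockInv_apply_of_fst_ne hr, mul_zero]

lemma apply_otherE_pos_of_two_mul_lt_vertexWeight (hq : ∀ e, 0 < q e) (hρ : ∀ p, 0 < ρ p)
    {p : Ehat G} (hp : 2 * ρ p < vertexWeight ρ p.val.2) :
    0 < (edgeBlockInv q ρ + vertexAverage ρ
      - (2 : ℝ) • (vertexAverage ρ * edgeBlockInv q ρ)) p (otherE p) := by
  have hσ : 0 < vertexWeight ρ p.val.2 := by linarith [hρ p]
  have hfactor : 0 < 1 - 2 * (ρ p / vertexWeight ρ p.val.2) := by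
    rw [← mul_div_assoc, sub_pos, div_lt_one hσ]
    exact hp
  have hentry : (edgeBlockInv q ρ + vertexAverage ρ
      - (2 : ℝ) • (vertexAverage ρ * edgeBlockInv q ρ)) p (otherE p)
        = edgeBlockInv q ρ p (otherE p) * (1 - 2 * (ρ p / vertexWeight ρ p.val.2)) := by
    rw [Matrix.sub_apply, Matrix.add_apply, Matrix.smul_apply,
      vertexAverage_mul_edgeBlockInv_apply,
      otherE_otherE, vertexAverage_apply_of_snd_ne (otherE_snd_ne p),
      vertexAverage_apply_of_snd_eq rfl, smul_eq_mul]
    ring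
  rw [hentry]
  exact mul_pos (edgeBlockInv_apply_otherE_pos hq hρ p) hfactor

lemma apply_otherE_neg_of_ne_of_snd_eq (hq : ∀ e, 0 < q e) (hρ : ∀ p, 0 < ρ p)
    {p r : Ehat G} (hrp : r ≠ p) (hr : r.val.2 = p.val.2) :
    (edgeBlockInv q ρ + vertexAverage ρ
      - (2 : ℝ) • (vertexAverage ρ * edgeBlockInv q ρ)) p (otherE r) < 0 := by
  have hσ : 0 < vertexWeight ρ p.val.2 := (hρ p).trans_le (le_vertexWeight hρ p)
  have hentry : (edgeBlockInv q ρ + vertexAverage ρ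
      - (2 : ℝ) • (vertexAverage ρ * edgeBlockInv q ρ)) p (otherE r)
        = -(2 * (ρ r / vertexWeight ρ p.val.2 * edgeBlockInv q ρ r (otherE r))) := by
    rw [Matrix.sub_apply, Matrix.add_apply, Matrix.smul_apply,
      vertexAverage_mul_edgeBlockInv_apply,
      otherE_otherE, vertexAverage_apply_of_snd_ne (by rw [hr.symm]; exact otherE_snd_ne r),
      vertexAverage_apply_of_snd_eq hr,
      edgeBlockInv_apply_of_fst_ne
        (by rw [otherE_fst]; exact (fst_ne_of_ne_of_snd_eq hrp hr).symm),
      smul_eq_mul]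
    ring
  rw [hentry, neg_lt_zero]
  have := hρ r
  have := edgeBlockInv_apply_otherE_pos hq hρ r
  positivity

end Entries

theorem exists_MA_apply_neg {V : Type*} [Fintype V] [DecidableEq V]
    (G : SimpleGraph V) [DecidableRel G.Adj]
    (hV : ∀ v, ∃ p : Ehat G, p.val.2 = v)
    (hdeg2 : ∀ p : Ehat G, ∃ r, r ≠ p ∧ r.val.2 = p.val.2)
    (hdeg3 : ∃ p₁ p₂ p₃ : Ehat G, p₁ ≠ p₂ ∧ p₁ ≠ p₃ ∧ p₂ ≠ p₃ ∧
      p₂.val.2 = p₁.val.2 ∧ p₃.val.2 = p₁.val.2)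
    (q : Sym2 V → ℝ) (hq : ∀ e, 0 < q e) (ρ : Ehat G → ℝ) (hρ : ∀ p, 0 < ρ p)
    (γ : ℝ) (hγ : 0 < γ) (DA : Ehat G → ℝ) (hDA : ∀ p, DA p ≠ 1) :
    let S := Smat G
    let Q := Qmat G q
    let Dρ := Matrix.diagonal ρ
    let A := (1 + Dρ⁻¹ * Q)⁻¹
    let B := S * (Sᵀ * Dρ * S)⁻¹ * Sᵀ * Dρ
    let TA := 1 - γ • (A + B - (2 : ℝ) • (B * A))
    let MA := (1 - Matrix.diagonal DA)⁻¹ * (TA - Matrix.diagonal DA)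
    ∃ p p' : Ehat G, MA p p' < 0 := by
  intro S Q Dρ A B TA MA
  have hσ (v : V) : vertexWeight ρ v ≠ 0 := by
    obtain ⟨p, rfl⟩ := hV v
    exact ((hρ p).trans_le (le_vertexWeight hρ p)).ne'
  have hA : A = edgeBlockInv q ρ := inv_one_add_diagonal_inv_mul_Qmat (fun e => (hq e).le) hρ
  have hB : B = vertexAverage ρ := Smat_mul_inv_mul_eq_vertexAverage hσ
  have hMA {p p' : Ehat G} (hpp' : p ≠ p') :
      MA p p' = -(γ * (edgeBlockInv q ρ + vertexAverage ρ
        - (2 : ℝ) • (vertexAverage ρ * edgeBlockInv q ρ)) p p') / (1 - DA p) := by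
    rw [← hA, ← hB]
    exact inv_one_sub_diagonal_mul_apply_of_ne hDA γ _ hpp'
  by_cases hlt : ∀ p, DA p < 1
  · obtain ⟨p₁, p₂, p₃, h12, h13, h23, h2, h3⟩ := hdeg3
    obtain ⟨p, hp⟩ := exists_two_mul_lt_vertexWeight hρ h12 h13 h23 h2 h3
    refine ⟨p, otherE p, ?_⟩
    rw [hMA (otherE_ne p).symm]
    exact div_neg_of_neg_of_pos
      (neg_neg_of_pos (mul_pos hγ (apply_otherE_pos_of_two_mul_lt_vertexWeight hq hρ hp)))
      (sub_pos.2 (hlt p))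
  · push Not at hlt
    obtain ⟨p, hp⟩ := hlt
    obtain ⟨r, hrp, hr⟩ := hdeg2 p
    refine ⟨p, otherE r, ?_⟩
    rw [hMA fun h => otherE_snd_ne r (by rw [← h, hr])]
    exact div_neg_of_pos_of_neg
      (neg_pos.2 (mul_neg_of_pos_of_neg hγ (apply_otherE_neg_of_ne_of_snd_eq hq hρ hrp hr)))
      (sub_neg.2 (hp.lt_of_ne (hDA p).symm))

/-- **Negative probabilities.**
For `G = K₄` minus one edge with unit weights, if the two penalty parameters attached to
vertex `2` (paper labelling) along the edges `(1,2)` and `(2,3)` differ, then for every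
`γ ∈ (0,2)` and every diagonal `D_A` with all diagonal entries different from `1`, the
matrix `M_A = (I-D_A)⁻¹(T_A-D_A)` has at least one strictly negative entry; in particular
it is not a probability transition matrix. -/
theorem MA_negative_entry
    (ρ : Ehat K4minus → ℝ) (hρ : ∀ p, 0 < ρ p)
    (γ : ℝ) (hγ : γ ∈ Set.Ioo (0 : ℝ) 2)
    (DA : Ehat K4minus → ℝ) (hDA : ∀ p, DA p ≠ 1) :
    let S := Smat K4minus
    let Q := Qmat K4minus (fun _ => 1)
    let Dρ := Matrix.diagonal ρ
    let A := (1 + Dρ⁻¹ * Q)⁻¹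
    let B := S * (Sᵀ * Dρ * S)⁻¹ * Sᵀ * Dρ
    let TA := 1 - γ • (A + B - (2 : ℝ) • (B * A))
    let MA := (1 - Matrix.diagonal DA)⁻¹ * (TA - Matrix.diagonal DA)
    ∃ p p' : Ehat K4minus, MA p p' < 0 :=
  exists_MA_apply_neg K4minus (by decide) (by decide) (by decide) _ (fun _ => one_pos) ρ hρ
    γ hγ.1 DA hDA
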